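/- arXiv:1709.04380 — 4 statements merged into one kernel-verified Lean document; each statement's English description precedes it below -/
import Mathlib

section
/- Let f : Σ* → ℝ be computed by a WFA with k states, and suppose the finite Hankel sub-block H_λ over a complete p-closed basis factorizes as H_λ = P·S with P ∈ ℝ^{P×k}, S ∈ ℝ^{k×S}, rank k. Then the WFA A = ⟨P_{λ,:}ᵀ, S_{:,λ}, {P⁺ H_σ S⁺}⟩ (with P⁺, S⁺ Moore–Penrose pseudoinverses) computes f. -/
open Matrix

/-- The four Penrose conditions characterizing the Moore–Penrose pseudoinverse. -/
def IsMoorePenrose {m n : Type*} [Fintype m] [Fintype n]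
    (M : Matrix m n ℝ) (Mp : Matrix n m ℝ) : Prop :=
  M * Mp * M = M ∧ Mp * M * Mp = Mp ∧ (M * Mp)ᵀ = M * Mp ∧ (Mp * M)ᵀ = Mp * M

/-- A matrix of full column rank has injective `mulVec`. -/
lemma fullColRank_mulVec_injective {m : Type*} [Fintype m] {k : ℕ}
    {M : Matrix m (Fin k) ℝ} (h : M.rank = k) : Function.Injective M.mulVec := by
  have hker : LinearMap.ker M.mulVecLin = ⊥ := by
    have h1 := M.mulVecLin.finrank_range_add_finrank_ker
    rw [Module.finrank_fintype_fun_eq_card, Fintype.card_fin] at h1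
    have h2 : Module.finrank ℝ (LinearMap.range M.mulVecLin) = k := h
    have h0 : Module.finrank ℝ (LinearMap.ker M.mulVecLin) = 0 := by omega
    exact Submodule.finrank_eq_zero.mp h0
  intro x y hxy
  exact LinearMap.ker_eq_bot.mp hker (by simpa [Matrix.mulVecLin_apply] using hxy)

/-- Left cancellation by a full-column-rank matrix. -/
lemma fullColRank_cancel_left {m n : Type*} [Fintype m] {k : ℕ}
    {M : Matrix m (Fin k) ℝ} (h : M.rank = k) {X Y : Matrix (Fin k) n ℝ}
    (hXY : M * X = M * Y) : X = Y := by
  ext i j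
  have hc : M.mulVec (fun l => X l j) = M.mulVec (fun l => Y l j) := by
    funext r
    have := congrFun (congrFun hXY r) j
    simpa [Matrix.mul_apply, Matrix.mulVec, dotProduct] using this
  exact congrFun (fullColRank_mulVec_injective h hc) i

/-- Right cancellation by a full-row-rank matrix. -/
lemma fullRowRank_cancel_right {m n : Type*} [Fintype m] {k : ℕ}
    {M : Matrix (Fin k) m ℝ} (h : M.rank = k) {X Y : Matrix n (Fin k) ℝ}
    (hXY : X * M = Y * M) : X = Y := by
  have hT : Mᵀ.rank = k := by rw [Matrix.rank_transpose]; exact h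
  have h2 : Mᵀ * Xᵀ = Mᵀ * Yᵀ := by
    rw [← Matrix.transpose_mul, ← Matrix.transpose_mul, hXY]
  have h3 : Xᵀ = Yᵀ := fullColRank_cancel_left hT h2
  calc X = Xᵀᵀ := by rw [Matrix.transpose_transpose]
    _ = Yᵀᵀ := by rw [h3]
    _ = Y := by rw [Matrix.transpose_transpose]

/-- spectral-learning recovery.  If `f` is computed by a WFA with `k`
states (and `k` is minimal, i.e. `rank(f) = k`), and the Hankel sub-block `H_λ` over a
complete basis `(Pb, Sb)` containing the empty word factorizes as `H_λ = Pm · Sm` with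
rank `k`, then the WFA `⟨Pm_{λ,:}, Sm_{:,λ}, {Pm⁺ H_σ Sm⁺}⟩` computes `f`. -/
theorem spectral_learning_recovery {σ : Type} [Fintype σ] [DecidableEq σ] (k : ℕ)
    (α0 αinf : Fin k → ℝ) (A : σ → Matrix (Fin k) (Fin k) ℝ)
    (f : List σ → ℝ)
    (hf : ∀ x : List σ, f x = α0 ⬝ᵥ ((x.map A).prod).mulVec αinf)
    (hmin : ∀ (k' : ℕ) (β0 βinf : Fin k' → ℝ) (B : σ → Matrix (Fin k') (Fin k') ℝ),
      (∀ x : List σ, f x = β0 ⬝ᵥ ((x.map B).prod).mulVec βinf) → k ≤ k')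
    (Pb Sb : Finset (List σ)) (hP : ([] : List σ) ∈ Pb) (hS : ([] : List σ) ∈ Sb)
    -- `H_λ` over the basis and its `p`-closure blocks `H_σ`
    (Hlam : Matrix Pb Sb ℝ)
    (hHlam : ∀ (u : Pb) (v : Sb), Hlam u v = f ((u : List σ) ++ (v : List σ)))
    (Hsig : σ → Matrix Pb Sb ℝ)
    (hHsig : ∀ (s : σ) (u : Pb) (v : Sb),
      Hsig s u v = f ((u : List σ) ++ [s] ++ (v : List σ)))
    -- completeness: the basis has full rank `k`
    (hcomplete : Hlam.rank = k)
    -- a rank-`k` factorization `H_λ = Pm · Sm`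
    (Pm : Matrix Pb (Fin k) ℝ) (Sm : Matrix (Fin k) Sb ℝ)
    (hfact : Hlam = Pm * Sm)
    -- Moore–Penrose pseudoinverses of the factors
    (Pp : Matrix (Fin k) Pb ℝ) (Sp : Matrix Sb (Fin k) ℝ)
    (hPp : IsMoorePenrose Pm Pp) (hSp : IsMoorePenrose Sm Sp) :
    ∀ x : List σ,
      f x = (fun i => Pm ⟨[], hP⟩ i) ⬝ᵥ
        ((x.map (fun s => Pp * Hsig s * Sp)).prod).mulVec (fun i => Sm i ⟨[], hS⟩) := by
  -- forward and backward matrices of the given WFA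
  set Fm : Matrix Pb (Fin k) ℝ :=
    Matrix.of (fun (u : Pb) (i : Fin k) => (α0 ᵥ* ((u : List σ).map A).prod) i) with hFm
  set Bm : Matrix (Fin k) Sb ℝ :=
    Matrix.of (fun (i : Fin k) (v : Sb) => (((v : List σ).map A).prod *ᵥ αinf) i) with hBm
  -- H_λ = Fm * Bm
  have hFB : Hlam = Fm * Bm := by
    ext u v
    rw [hHlam, hf, Matrix.mul_apply]
    rw [List.map_append, List.prod_append, ← Matrix.mulVec_mulVec,
      Matrix.dotProduct_mulVec]
    rfl
  -- H_σ = Fm * A s * Bm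
  have hFsB : ∀ s : σ, Hsig s = Fm * A s * Bm := by
    intro s
    ext u v
    rw [hHsig, hf, Matrix.mul_apply]
    have hrow : ∀ i, (Fm * A s) u i = (α0 ᵥ* (((u : List σ).map A).prod * A s)) i := by
      intro i
      rw [Matrix.mul_apply, ← Matrix.vecMul_vecMul]
      rfl
    calc α0 ⬝ᵥ ((((u : List σ) ++ [s] ++ (v : List σ)).map A).prod) *ᵥ αinf
        = (α0 ᵥ* (((u : List σ).map A).prod * A s)) ⬝ᵥ (((v : List σ)).map A).prod *ᵥ αinf := by
          rw [List.map_append, List.map_append, List.prod_append, List.prod_append,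
            List.map_singleton, List.prod_singleton, ← Matrix.mulVec_mulVec,
            Matrix.dotProduct_mulVec]
      _ = ∑ i, (Fm * A s) u i * Bm i v := by
          simp only [hrow]; rfl
  -- rank facts
  have hrankFm : Fm.rank = k := by
    refine le_antisymm ?_ ?_
    · simpa using Fm.rank_le_card_width
    · calc k = Hlam.rank := hcomplete.symm
        _ ≤ Fm.rank := by rw [hFB]; exact Matrix.rank_mul_le_left Fm Bm
  have hrankBm : Bm.rank = k := by
    refine le_antisymm ?_ ?_
    · simpa using Matrix.rank_le_card_height Bm
    · calc k = Hlam.rank := hcomplete.symm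
        _ ≤ Bm.rank := by rw [hFB]; exact Matrix.rank_mul_le_right Fm Bm
  have hrankPm : Pm.rank = k := by
    refine le_antisymm ?_ ?_
    · simpa using Pm.rank_le_card_width
    · calc k = Hlam.rank := hcomplete.symm
        _ ≤ Pm.rank := by rw [hfact]; exact Matrix.rank_mul_le_left Pm Sm
  have hrankSm : Sm.rank = k := by
    refine le_antisymm ?_ ?_
    · simpa using Matrix.rank_le_card_height Sm
    · calc k = Hlam.rank := hcomplete.symm
        _ ≤ Sm.rank := by rw [hfact]; exact Matrix.rank_mul_le_right Pm Sm
  -- pseudoinverses of full-rank factors are one-sided inverses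
  have hPpPm : Pp * Pm = 1 := by
    refine fullColRank_cancel_left hrankPm ?_
    rw [← Matrix.mul_assoc, hPp.1, Matrix.mul_one]
  have hSmSp : Sm * Sp = 1 := by
    refine fullRowRank_cancel_right hrankSm ?_
    rw [Matrix.mul_assoc, Matrix.one_mul]
    rw [← Matrix.mul_assoc]
    exact hSp.1
  -- the change of basis matrices (kept opaque)
  obtain ⟨M, hM⟩ : ∃ M : Matrix (Fin k) (Fin k) ℝ, M = Bm * Sp := ⟨_, rfl⟩
  obtain ⟨N, hN⟩ : ∃ N : Matrix (Fin k) (Fin k) ℝ, N = Pp * Fm := ⟨_, rfl⟩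
  have hPmFM : Pm = Fm * M := by
    calc Pm = Pm * (Sm * Sp) := by rw [hSmSp, Matrix.mul_one]
      _ = (Pm * Sm) * Sp := by rw [Matrix.mul_assoc]
      _ = (Fm * Bm) * Sp := by rw [← hfact, hFB]
      _ = Fm * M := by rw [hM, Matrix.mul_assoc]
  have hSmNB : Sm = N * Bm := by
    calc Sm = (Pp * Pm) * Sm := by rw [hPpPm, Matrix.one_mul]
      _ = Pp * (Pm * Sm) := by rw [Matrix.mul_assoc]
      _ = Pp * (Fm * Bm) := by rw [← hfact, hFB]
      _ = N * Bm := by rw [hN, ← Matrix.mul_assoc]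
  have hMN : M * N = 1 := by
    have h1 : Fm * ((M * N) * Bm) = Fm * ((1 : Matrix (Fin k) (Fin k) ℝ) * Bm) := by
      rw [Matrix.one_mul]
      calc Fm * ((M * N) * Bm) = (Fm * M) * (N * Bm) := by
            rw [Matrix.mul_assoc, Matrix.mul_assoc]
        _ = Pm * Sm := by rw [← hPmFM, ← hSmNB]
        _ = Fm * Bm := by rw [← hfact, hFB]
    have h2 : (M * N) * Bm = (1 : Matrix (Fin k) (Fin k) ℝ) * Bm :=
      fullColRank_cancel_left hrankFm h1
    exact fullRowRank_cancel_right hrankBm h2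
  have hNM : N * M = 1 := mul_eq_one_comm.mp hMN
  -- the learned transition matrices are conjugates
  have hAs : ∀ s : σ, Pp * Hsig s * Sp = N * A s * M := by
    intro s
    rw [hFsB s, hN, hM]
    simp only [Matrix.mul_assoc]
  have hprod : ∀ x : List σ,
      ((x.map (fun s => Pp * Hsig s * Sp)).prod) = N * ((x.map A).prod) * M := by
    intro x
    induction x with
    | nil => rw [List.map_nil, List.prod_nil, List.map_nil, List.prod_nil,
        Matrix.mul_one, hNM]
    | cons s t ih =>
        simp only [List.map_cons, List.prod_cons, ih, hAs s]
        calc N * A s * M * (N * (t.map A).prod * M)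
            = N * (A s * ((M * N) * ((t.map A).prod * M))) := by
              simp only [Matrix.mul_assoc]
          _ = N * (A s * (t.map A).prod) * M := by
              rw [hMN, Matrix.one_mul]; simp only [Matrix.mul_assoc]
  intro x
  -- initial and final vectors
  have hinit : (fun i => Pm ⟨[], hP⟩ i) = α0 ᵥ* M := by
    funext i
    rw [hPmFM, Matrix.mul_apply]
    have h0 : ∀ j, Fm ⟨[], hP⟩ j = α0 j := by
      intro j
      show (α0 ᵥ* (([] : List σ).map A).prod) j = α0 j
      simp
    simp only [h0]
    rfl
  have hfin : (fun i => Sm i ⟨[], hS⟩) = N *ᵥ αinf := by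
    funext i
    rw [hSmNB, Matrix.mul_apply]
    have h0 : ∀ j, Bm j ⟨[], hS⟩ = αinf j := by
      intro j
      show ((([] : List σ).map A).prod *ᵥ αinf) j = αinf j
      simp
    simp only [h0]
    rfl
  rw [hprod, hinit, hfin, hf]
  have hPx : M * (N * (x.map A).prod * M) * N = (x.map A).prod := by
    calc M * (N * (x.map A).prod * M) * N
        = (M * N) * ((x.map A).prod * (M * N)) := by simp only [Matrix.mul_assoc]
      _ = (x.map A).prod := by rw [hMN, Matrix.mul_one, Matrix.one_mul]
  calc α0 ⬝ᵥ (x.map A).prod *ᵥ αinf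
      = α0 ⬝ᵥ (M * (N * (x.map A).prod * M) * N) *ᵥ αinf := by rw [hPx]
    _ = α0 ⬝ᵥ M *ᵥ ((N * (x.map A).prod * M) *ᵥ (N *ᵥ αinf)) := by
        rw [Matrix.mulVec_mulVec, Matrix.mulVec_mulVec]
    _ = (α0 ᵥ* M) ⬝ᵥ (N * (x.map A).prod * M) *ᵥ (N *ᵥ αinf) := by
        rw [Matrix.dotProduct_mulVec]
end

section
/- Let P ⊂ Σ* be prefix-closed with λ ∈ P, and let φ : ℝ^S → ℝ^k, φ' : ℝ^k → ℝ^S, and G_σ : ℝ^k → ℝ^k (σ ∈ Σ) be arbitrary functions satisfying (i) φ'(φ(H_{u,:})) = H_{u,:} for all u ∈ P ∪ PΣ, and (ii) G_σ(φ(H_{u,:})) = φ(H_{uσ,:}) for all u ∈ P and σ ∈ Σ. Then the nonlinear WFA à = ⟨α₀, G_λ, {G_σ}⟩ with α₀ = φ(H_{λ,:}) and G_λ(x) = λᵀ φ'(x) (the λ-coordinate of φ'(x)) satisfies f_Ã(u) = H_{u,λ} for all u ∈ P. -/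
open Matrix

/-- exact recovery for nonlinear WFA.  If the autoencoder `(φ, φ')`
exactly reconstructs the Hankel rows over `P ∪ PΣ` and the transition maps `G_σ`
exactly fit on `P`, then the NL-WFA `⟨φ(H_{λ,:}), G_λ, {G_σ}⟩` with
`G_λ(x) = λᵀ φ'(x)` satisfies `f_Ã(u) = H_{u,λ}` for all `u ∈ P`. -/
theorem nlwfa_exact_recovery {σ : Type} [Fintype σ] (k : ℕ)
    (S : Finset (List σ)) (hS : ([] : List σ) ∈ S)
    (P : Set (List σ)) (hP : ([] : List σ) ∈ P)
    (hPclosed : ∀ u v : List σ, u ++ v ∈ P → u ∈ P)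
    (H : List σ → (S → ℝ))  -- rows of the Hankel sub-block
    (φ : (S → ℝ) → (Fin k → ℝ)) (φ' : (Fin k → ℝ) → (S → ℝ))
    (G : σ → (Fin k → ℝ) → (Fin k → ℝ))
    (hrec : ∀ u ∈ P, φ' (φ (H u)) = H u)
    (hrec' : ∀ u ∈ P, ∀ s : σ, φ' (φ (H (u ++ [s]))) = H (u ++ [s]))
    (htrans : ∀ u ∈ P, ∀ s : σ, G s (φ (H u)) = φ (H (u ++ [s]))) :
    ∀ u ∈ P,
      φ' (u.foldl (fun acc s => G s acc) (φ (H []))) ⟨[], hS⟩ = H u ⟨[], hS⟩ := by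
  have key : ∀ u ∈ P, u.foldl (fun acc s => G s acc) (φ (H [])) = φ (H u) := by
    intro u
    induction u using List.reverseRecOn with
    | nil => intro _; simp
    | append_singleton v s ih =>
      intro hv
      have hvP : v ∈ P := hPclosed v [s] hv
      rw [List.foldl_append, ih hvP]
      simp [htrans v hvP s]
  intro u hu
  rw [key u hu, hrec u hu]
end

section
/- If the Hankel matrix of f : Σ* → ℝ has finite rank k, then f is recognizable by a WFA with k states (the converse direction of the Carlyle–Paz/Fliess theorem). -/
/-!
The row space `V` of the Hankel matrix is stable under every left shift `g ↦ g ∘ (c :: ·)`,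
since the shift of the row of `u` is the row of `u ++ [c]`. In a basis of `V` the shifts
become the transition matrices, evaluation at the empty word gives the final vector, and the
coordinates of the row of the empty word (which is `f` itself) give the initial vector:
`g (c :: t) = (shift_c g) t` unfolds `g x` letter by letter into the matrix product.
-/

open Matrix LinearMap

variable {K σ : Type*}

def hankelRowSpace [Semiring K] (f : List σ → K) : Submodule K (List σ → K) :=
  Submodule.span K (Set.range fun u v => f (u ++ v))

lemma hankelRowSpace_le_comap_funLeft_cons [Semiring K] (f : List σ → K) (c : σ) :
    hankelRowSpace f ≤ (hankelRowSpace f).comap (funLeft K K (List.cons c)) :=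
  Submodule.span_le.2 <| by
    rintro _ ⟨u, rfl⟩
    exact Submodule.subset_span ⟨u ++ [c], by funext v; simp [funLeft]⟩

section ShiftStable

variable [CommSemiring K] {ι : Type*} [Fintype ι]
  {V : Submodule K (List σ → K)} (hV : ∀ c, V ≤ V.comap (funLeft K K (List.cons c)))
  (b : Module.Basis ι K V)

def shiftRestrict (c : σ) : V →ₗ[K] V :=
  (funLeft K K (List.cons c)).restrict fun _ hg => hV c hg

lemma coe_apply_nil_eq_dotProduct (g : V) :
    (g : List σ → K) [] = b.repr g ⬝ᵥ fun i => (b i : List σ → K) [] := by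
  conv_lhs => rw [← b.sum_repr g]
  simp only [Submodule.coe_sum, Submodule.coe_smul, Finset.sum_apply, Pi.smul_apply, smul_eq_mul,
    dotProduct]

variable [DecidableEq ι]

/-- Transposed so that the word is read left to right as a row vector times the matrices. -/
noncomputable def shiftMatrix (c : σ) : Matrix ι ι K :=
  (toMatrix b b (shiftRestrict hV c))ᵀ

lemma repr_shiftRestrict (c : σ) (g : V) :
    ⇑(b.repr (shiftRestrict hV c g)) = b.repr g ᵥ* shiftMatrix hV b c := by
  rw [shiftMatrix, vecMul_transpose, toMatrix_mulVec_repr]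

theorem coe_apply_eq_dotProduct_prod_mulVec (g : V) (x : List σ) :
    (g : List σ → K) x =
      b.repr g ⬝ᵥ (x.map (shiftMatrix hV b)).prod *ᵥ fun i => (b i : List σ → K) [] := by
  induction x generalizing g with
  | nil => simpa using coe_apply_nil_eq_dotProduct b g
  | cons c t ih =>
    calc (g : List σ → K) (c :: t) = (shiftRestrict hV c g : List σ → K) t := rfl
      _ = _ := by
        rw [ih, repr_shiftRestrict, ← dotProduct_mulVec, mulVec_mulVec, List.map_cons,
          List.prod_cons]

end ShiftStable

theorem finite_hankel_rank_recognizable_general {σ : Type} (f : List σ → ℝ) (k : ℕ)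
    (hrank : Module.rank ℝ (Submodule.span ℝ
      (Set.range (fun u : List σ => fun v : List σ => f (u ++ v)))) = k) :
    ∃ (α0 αinf : Fin k → ℝ) (A : σ → Matrix (Fin k) (Fin k) ℝ),
      ∀ x : List σ, f x = α0 ⬝ᵥ ((x.map A).prod).mulVec αinf := by
  change Module.rank ℝ (hankelRowSpace f) = k at hrank
  have : FiniteDimensional ℝ (hankelRowSpace f) := .of_rank_eq_nat hrank
  let b := Module.finBasisOfFinrankEq ℝ _ (Module.finrank_eq_of_rank_eq hrank)
  let row₀ : hankelRowSpace f := ⟨f, Submodule.subset_span ⟨[], rfl⟩⟩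
  exact ⟨b.repr row₀, _, _,
    coe_apply_eq_dotProduct_prod_mulVec (hankelRowSpace_le_comap_funLeft_cons f) b row₀⟩

/-- if the Hankel matrix of `f` has finite rank `k` then `f` is
computed by a WFA with `k` states (converse of the Carlyle–Paz/Fliess theorem). -/
theorem finite_hankel_rank_recognizable {σ : Type} [Fintype σ] (f : List σ → ℝ) (k : ℕ)
    (hrank : Module.rank ℝ (Submodule.span ℝ
      (Set.range (fun u : List σ => fun v : List σ => f (u ++ v)))) = k) :
    ∃ (α0 αinf : Fin k → ℝ) (A : σ → Matrix (Fin k) (Fin k) ℝ),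
      ∀ x : List σ, f x = α0 ⬝ᵥ ((x.map A).prod).mulVec αinf :=
  finite_hankel_rank_recognizable_general f k hrank
end

section
/- The probabilistic Dyck language distribution cannot be computed by any WFA: there is no WFA A over Σ = {[, ]} such that f_A(u) equals the probability of generating u under the PCFG with rules S → SS (prob 0.2), S → [S] (prob 0.4), S → [] (prob 0.4). Equivalently, it suffices to show the Hankel matrix of this distribution has infinite rank, as witnessed by the infinite family of rows indexed by prefixes [ⁿ being linearly independent. -/
/-!
Restricted to the prefixes `[ⁱ⁺¹` and suffixes `]ʲ⁺¹`, the Hankel matrix of the Dyck distribution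
is diagonal with nonzero diagonal: the only derivation of `[ⁱ⁺¹]ʲ⁺¹` is the fully nested one,
which exists iff `i = j` and has probability `0.4ⁱ⁺¹`; any other tree `S → SS` would split off a
balanced nonempty factor consisting of a single letter. For a WFA with `k` states every block of
the Hankel matrix factors through `ℝᵏ` and so has rank at most `k`, which rules out a
`(k+1) × (k+1)` nonsingular diagonal block.
-/

open Matrix

/-- Derivation trees of the PCFG `S → SS | [S] | []` over `Σ = {[, ]}`,
encoded with `true = '['` and `false = ']'`. -/
inductive DyckTree : Type
  | leaf : DyckTree                       -- S → []
  | wrap : DyckTree → DyckTree            -- S → [S]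
  | node : DyckTree → DyckTree → DyckTree -- S → SS

/-- The string produced by a derivation tree. -/
def DyckTree.yield : DyckTree → List Bool
  | .leaf => [true, false]
  | .wrap t => true :: (t.yield ++ [false])
  | .node l r => l.yield ++ r.yield

/-- The probability of a derivation tree: rules `S → SS`, `S → [S]`, `S → []` have
probabilities `0.2`, `0.4`, `0.4` respectively. -/
noncomputable def DyckTree.prob : DyckTree → ℝ
  | .leaf => 0.4
  | .wrap t => 0.4 * t.prob
  | .node l r => 0.2 * l.prob * r.prob

/-- The probabilistic Dyck language distribution: the total probability of all
derivations of `u` (and `0` on strings with no derivation). -/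
noncomputable def dyckProb (u : List Bool) : ℝ :=
  ∑' t : {t : DyckTree // t.yield = u}, (t : DyckTree).prob

namespace DyckTree

lemma yield_ne_nil (t : DyckTree) : t.yield ≠ [] := by
  induction t <;> simp [yield, *]

lemma count_true_yield (t : DyckTree) : t.yield.count true = t.yield.count false := by
  induction t with
  | leaf => simp [yield]
  | wrap t ih => simp [yield, List.count_append, ih]
  | node l r ihl ihr => simp [yield, List.count_append, ihl, ihr]

lemma yield_ne_replicate (t : DyckTree) (n : ℕ) (b : Bool) : t.yield ≠ List.replicate n b := by
  intro h
  have hcount := t.count_true_yield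
  have hn : n = 0 := by cases b <;> simp_all [List.count_replicate]
  exact t.yield_ne_nil (by simp [h, hn])

def nested : ℕ → DyckTree
  | 0 => leaf
  | n + 1 => wrap (nested n)

lemma yield_nested (n : ℕ) :
    (nested n).yield = List.replicate (n + 1) true ++ List.replicate (n + 1) false := by
  induction n with
  | zero => rfl
  | succ n ih =>
    rw [nested, yield, ih, List.replicate_succ' (n := n + 1) (a := false)]
    simp [List.replicate_succ]

lemma prob_nested (n : ℕ) : (nested n).prob = 0.4 ^ (n + 1) := by
  induction n with
  | zero => simp [nested, prob]
  | succ n ih => rw [nested, prob, ih, pow_succ' _ (n + 1)]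

lemma eq_nested_of_yield_eq {t : DyckTree} {a b : ℕ}
    (h : t.yield = List.replicate (a + 1) true ++ List.replicate (b + 1) false) :
    a = b ∧ t = nested a := by
  induction t generalizing a b with
  | leaf =>
    cases a <;> cases b <;> simp_all [yield, List.replicate_succ]
    rfl
  | wrap s ih =>
    rw [yield, List.replicate_succ' (n := b), ← List.append_assoc] at h
    have hs := List.append_cancel_right (List.cons_inj_right true |>.mp h)
    cases a with
    | zero => exact absurd (by simpa using hs) (s.yield_ne_replicate b false)
    | succ a =>
      cases b with
      | zero => exact absurd (by simpa using hs) (s.yield_ne_replicate (a + 1) true)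
      | succ b =>
        obtain ⟨rfl, rfl⟩ := ih hs
        exact ⟨rfl, rfl⟩
  | node l r =>
    rw [yield, List.append_eq_append_iff] at h
    rcases h with ⟨w, hl, -⟩ | ⟨w, -, hr⟩
    · rw [eq_comm, List.append_eq_replicate_iff] at hl
      exact absurd hl.2.1 (l.yield_ne_replicate _ true)
    · rw [eq_comm, List.append_eq_replicate_iff] at hr
      exact absurd hr.2.2 (r.yield_ne_replicate _ false)

end DyckTree

open DyckTree in
lemma dyckProb_replicate_append_replicate (a b : ℕ) :
    dyckProb (List.replicate (a + 1) true ++ List.replicate (b + 1) false) =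
      if a = b then 0.4 ^ (a + 1) else 0 := by
  split_ifs with hab
  · subst hab
    rw [dyckProb, tsum_eq_single ⟨nested a, yield_nested a⟩
      fun t ht => absurd (Subtype.ext (eq_nested_of_yield_eq t.2).2) ht]
    exact prob_nested a
  · have : IsEmpty {t : DyckTree // t.yield = _} :=
      ⟨fun t => hab (eq_nested_of_yield_eq t.2).1⟩
    rw [dyckProb, tsum_empty]

section WeightedAutomaton

variable {σ Q : Type*} [Fintype Q] [DecidableEq Q]

/-- A block of the Hankel matrix of a weighted automaton factors through its state space. -/
lemma rank_hankel_block_le {R ι : Type*} [CommSemiring R] [StrongRankCondition R] [Fintype ι]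
    (α0 αinf : Q → R) (A : σ → Matrix Q Q R) (p s : ι → List σ) :
    (Matrix.of fun i j => α0 ⬝ᵥ ((p i ++ s j).map A).prod *ᵥ αinf).rank ≤ Fintype.card Q := by
  let rows : Matrix ι Q R := Matrix.of fun i => α0 ᵥ* ((p i).map A).prod
  let cols : Matrix Q ι R := Matrix.of fun q j => (((s j).map A).prod *ᵥ αinf) q
  have hfactor : Matrix.of (fun i j => α0 ⬝ᵥ ((p i ++ s j).map A).prod *ᵥ αinf) = rows * cols := by
    ext i j
    rw [of_apply, List.map_append, List.prod_append, ← mulVec_mulVec, dotProduct_mulVec]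
    rfl
  rw [hfactor]
  exact (rank_mul_le_left _ _).trans (rank_le_card_width _)

lemma not_wfa_of_hankel_diagonal {K : Type*} [Field K] (f : List σ → K) (p s : ℕ → List σ)
    (d : ℕ → K) (hd : ∀ i, d i ≠ 0) (hf : ∀ i j, f (p i ++ s j) = if i = j then d i else 0)
    (α0 αinf : Q → K) (A : σ → Matrix Q Q K) :
    ¬ ∀ u, f u = α0 ⬝ᵥ (u.map A).prod *ᵥ αinf := by
  intro hA
  classical
  let N := Fintype.card Q + 1
  have hdiag : Matrix.of (fun i j : Fin N => α0 ⬝ᵥ ((p i ++ s j).map A).prod *ᵥ αinf) =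
      diagonal fun i => d i.val := by
    ext i j
    rw [of_apply, ← hA, hf, diagonal_apply]
    simp only [Fin.val_inj]
  have hrank : (diagonal fun i : Fin N => d i).rank ≤ Fintype.card Q :=
    hdiag ▸ rank_hankel_block_le α0 αinf A (fun i : Fin N => p i) (fun j : Fin N => s j)
  simp [rank_diagonal, hd, N] at hrank

end WeightedAutomaton

/-- no WFA over `Σ = {[, ]}` computes the probabilistic Dyck
language distribution. -/
theorem dyck_not_recognizable :
    ¬ ∃ (k : ℕ) (α0 αinf : Fin k → ℝ) (A : Bool → Matrix (Fin k) (Fin k) ℝ),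
        ∀ u : List Bool, dyckProb u = α0 ⬝ᵥ ((u.map A).prod).mulVec αinf := by
  rintro ⟨k, α0, αinf, A, hA⟩
  exact not_wfa_of_hankel_diagonal dyckProb (fun i => List.replicate (i + 1) true)
    (fun j => List.replicate (j + 1) false) (fun i => 0.4 ^ (i + 1)) (fun i => by positivity)
    dyckProb_replicate_append_replicate α0 αinf A hA
end
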